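/- For every type T of object types and every T-signature S, the category of representations of S — whose objects are representations of S in monads on [T,Set] and whose morphisms are morphisms of representations — has an initial object. -/

import Mathlib

set_option autoImplicit false

universe u

/-- A monad (Kleisli triple) on the category `[T,Set]` of `T`-indexed families of types. -/
structure FMonad (T : Type u) where
  obj : (T → Type u) → T → Type u
  eta : ∀ {V : T → Type u} (t : T), V t → obj V t
  subst : ∀ {V W : T → Type u}, (∀ t, V t → obj W t) → ∀ t, obj V t → obj W t
  eta_subst : ∀ {V W : T → Type u} (f : ∀ t, V t → obj W t) (t : T) (v : V t),
    subst f t (eta t v) = f t v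
  subst_eta : ∀ {V : T → Type u} (t : T) (x : obj V t),
    subst (fun t v => eta t v) t x = x
  subst_subst : ∀ {V W X : T → Type u} (f : ∀ t, V t → obj W t)
    (g : ∀ t, W t → obj X t) (t : T) (x : obj V t),
    subst g t (subst f t x) = subst (fun t v => subst g t (f t v)) t x

/-- A module over the monad `P` with codomain `[T,Set]`. -/
structure FModF {T : Type u} (P : FMonad T) where
  obj : (T → Type u) → T → Type u
  subst : ∀ {V W : T → Type u}, (∀ t, V t → P.obj W t) → ∀ t, obj V t → obj W t
  subst_eta : ∀ {V : T → Type u} (t : T) (x : obj V t),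
    subst (fun t v => P.eta t v) t x = x
  subst_subst : ∀ {V W X : T → Type u} (f : ∀ t, V t → P.obj W t)
    (g : ∀ t, W t → P.obj X t) (t : T) (x : obj V t),
    subst g t (subst f t x) = subst (fun t v => P.subst g t (f t v)) t x

/-- A module over the monad `P` with codomain `Set` (the category of types). -/
structure FModS {T : Type u} (P : FMonad T) where
  obj : (T → Type u) → Type u
  subst : ∀ {V W : T → Type u}, (∀ t, V t → P.obj W t) → obj V → obj W
  subst_eta : ∀ {V : T → Type u} (x : obj V),
    subst (fun t v => P.eta t v) x = x
  subst_subst : ∀ {V W X : T → Type u} (f : ∀ t, V t → P.obj W t)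
    (g : ∀ t, W t → P.obj X t) (x : obj V),
    subst g (subst f x) = subst (fun t v => P.subst g t (f t v)) x

/-- Morphism of `P`-modules with codomain `[T,Set]`. -/
structure FModFHom {T : Type u} {P : FMonad T} (M N : FModF P) where
  app : ∀ (V : T → Type u) (t : T), M.obj V t → N.obj V t
  natural : ∀ {V W : T → Type u} (f : ∀ t, V t → P.obj W t) (t : T) (x : M.obj V t),
    app W t (M.subst f t x) = N.subst f t (app V t x)

/-- Morphism of `P`-modules with codomain `Set`. -/
structure FModSHom {T : Type u} {P : FMonad T} (M N : FModS P) where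
  app : ∀ (V : T → Type u), M.obj V → N.obj V
  natural : ∀ {V W : T → Type u} (f : ∀ t, V t → P.obj W t) (x : M.obj V),
    app W (M.subst f x) = N.subst f (app V x)

/-- Morphism of monads on `[T,Set]`. -/
structure FMonadHom {T : Type u} (P Q : FMonad T) where
  app : ∀ (V : T → Type u) (t : T), P.obj V t → Q.obj V t
  app_eta : ∀ {V : T → Type u} (t : T) (v : V t), app V t (P.eta t v) = Q.eta t v
  app_subst : ∀ {V W : T → Type u} (f : ∀ t, V t → P.obj W t) (t : T) (x : P.obj V t),
    app W t (P.subst f t x) = Q.subst (fun t v => app W t (f t v)) t (app V t x)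

/-- `Fresh a V` is the family `V` enriched with one fresh element of index `a`,
i.e. `V^{*a}`. -/
inductive Fresh {T : Type u} (a : T) (V : T → Type u) : T → Type u where
  | old : ∀ {t : T}, V t → Fresh a V t
  | new : Fresh a V a

/-- The shifted map `f^a : V^{*a} → P (W^{*a})`. -/
def fshift {T : Type u} (P : FMonad T) (a : T) {V W : T → Type u}
    (f : ∀ t, V t → P.obj W t) : ∀ t, Fresh a V t → P.obj (Fresh a W) t
  | _, .old v => P.subst (fun t w => P.eta t (Fresh.old w)) _ (f _ v)
  | _, .new => P.eta a Fresh.new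

theorem fshift_eta {T : Type u} (P : FMonad T) (a : T) (V : T → Type u) :
    fshift P a (fun t (v : V t) => P.eta t v) = fun t v => P.eta t v := by
  funext t x
  cases x with
  | old v => simp [fshift, P.eta_subst]
  | new => rfl

theorem fshift_comp {T : Type u} (P : FMonad T) (a : T) {V W X : T → Type u}
    (f : ∀ t, V t → P.obj W t) (g : ∀ t, W t → P.obj X t) (t : T) (x : Fresh a V t) :
    P.subst (fshift P a g) t (fshift P a f t x)
      = fshift P a (fun t v => P.subst g t (f t v)) t x := by
  cases x with
  | new => simp [fshift, P.eta_subst]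
  | old v =>
    simp only [fshift]
    rw [P.subst_subst, P.subst_subst]
    have h : (fun (t : T) (w : W t) =>
        P.subst (fshift P a g) t (P.eta t (Fresh.old w)))
        = fun (t : T) (w : W t) =>
            P.subst (fun t w => P.eta t (Fresh.old w)) t (g t w) := by
      funext t w
      rw [P.eta_subst]
      rfl
    rw [h]

/-- The derived module `M^a`. -/
def derMod {T : Type u} {P : FMonad T} (a : T) (M : FModF P) : FModF P where
  obj V := M.obj (Fresh a V)
  subst f := M.subst (fshift P a f)
  subst_eta := by
    intro V t x
    show M.subst (fshift P a fun t v => P.eta t v) t x = x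
    rw [fshift_eta]
    exact M.subst_eta t x
  subst_subst := by
    intro V W X f g t x
    show M.subst (fshift P a g) t (M.subst (fshift P a f) t x)
      = M.subst (fshift P a fun t v => P.subst g t (f t v)) t x
    rw [M.subst_subst]
    have h : (fun (t : T) (y : Fresh a V t) =>
        P.subst (fshift P a g) t (fshift P a f t y))
        = fshift P a (fun t v => P.subst g t (f t v)) := by
      funext t y
      exact fshift_comp P a f g t y
    rw [h]

/-- The fibre module `M_a`. -/
def fibMod {T : Type u} {P : FMonad T} (a : T) (M : FModF P) : FModS P where
  obj V := M.obj V a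
  subst f x := M.subst f a x
  subst_eta x := M.subst_eta a x
  subst_subst f g x := M.subst_subst f g a x

/-- The pullback of a `Q`-module (codomain `[T,Set]`) along a monad morphism. -/
def pbModF {T : Type u} {P Q : FMonad T} (h : FMonadHom P Q) (M : FModF Q) :
    FModF P where
  obj := M.obj
  subst f := M.subst (fun t v => h.app _ t (f t v))
  subst_eta := by
    intro V t x
    show M.subst (fun t v => h.app V t (P.eta t v)) t x = x
    have e : (fun (t : T) (v : V t) => h.app V t (P.eta t v))
        = fun t v => Q.eta t v := by
      funext t v; exact h.app_eta t v
    rw [e]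
    exact M.subst_eta t x
  subst_subst := by
    intro V W X f g t x
    show M.subst (fun t v => h.app X t (g t v)) t
        (M.subst (fun t v => h.app W t (f t v)) t x)
      = M.subst (fun t v => h.app X t (P.subst g t (f t v))) t x
    rw [M.subst_subst]
    have e : (fun (t : T) (v : V t) =>
        Q.subst (fun t v => h.app X t (g t v)) t (h.app W t (f t v)))
        = fun (t : T) (v : V t) => h.app X t (P.subst g t (f t v)) := by
      funext t v
      rw [h.app_subst]
    rw [e]

/-- The pullback of a `Q`-module (codomain `Set`) along a monad morphism. -/
def pbModS {T : Type u} {P Q : FMonad T} (h : FMonadHom P Q) (M : FModS Q) :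
    FModS P where
  obj := M.obj
  subst f x := M.subst (fun t v => h.app _ t (f t v)) x
  subst_eta := by
    intro V x
    show M.subst (fun t v => h.app V t (P.eta t v)) x = x
    have e : (fun (t : T) (v : V t) => h.app V t (P.eta t v))
        = fun t v => Q.eta t v := by
      funext t v; exact h.app_eta t v
    rw [e]
    exact M.subst_eta x
  subst_subst := by
    intro V W X f g x
    show M.subst (fun t v => h.app X t (g t v))
        (M.subst (fun t v => h.app W t (f t v)) x)
      = M.subst (fun t v => h.app X t (P.subst g t (f t v))) x
    rw [M.subst_subst]
    have e : (fun (t : T) (v : V t) =>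
        Q.subst (fun t v => h.app X t (g t v)) t (h.app W t (f t v)))
        = fun (t : T) (v : V t) => h.app X t (P.subst g t (f t v)) := by
      funext t v
      rw [h.app_subst]
    rw [e]

/-- `pow l V` is `V` enriched with fresh variables of types according to the list `l`,
written `V ** l`. -/
def pow {T : Type u} (l : List T) (V : T → Type u) : T → Type u :=
  match l with
  | [] => V
  | b :: bs => pow bs (Fresh b V)

/-- Multiple shifting `f^{s⃗}`. -/
def lshift {T : Type u} (P : FMonad T) :
    ∀ (l : List T) {V W : T → Type u},
      (∀ t, V t → P.obj W t) → ∀ t, pow l V t → P.obj (pow l W) t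
  | [], _, _, f => f
  | b :: bs, _, _, f => lshift P bs (fshift P b f)

/-- The carrier of the product module `(M^{s⃗₁})_{t₁} × ⋯ × (M^{s⃗ₙ})_{tₙ}`
associated to the argument list of an arity: a heterogeneous list. -/
inductive Args {T : Type u} (M : (T → Type u) → T → Type u) (V : T → Type u) :
    List (List T × T) → Type u where
  | nil : Args M V []
  | cons : ∀ {b : List T × T} {bs : List (List T × T)},
      M (pow b.1 V) b.2 → Args M V bs → Args M V (b :: bs)

/-- The module substitution of the product module associated to an argument list. -/
def argSubst {T : Type u} (P : FMonad T) {V W : T → Type u}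
    (f : ∀ t, V t → P.obj W t) :
    ∀ {l : List (List T × T)}, Args P.obj V l → Args P.obj W l
  | _, .nil => .nil
  | _, .cons (b := b) x xs => .cons (P.subst (lshift P b.1 f) b.2 x) (argSubst P f xs)

/-- A `T`-signature: a family of `T`-arities, indexed by some type.
An arity is a pair of a list of pairs `(s⃗, t)` and an output type `t₀`. -/
structure Signature (T : Type u) where
  idx : Type u
  ar : idx → List (List T × T) × T

/-- A representation of the signature `S`: a monad on `[T,Set]` together with,
for each arity of `S`, a module morphism from the associated product of derived
fibre modules to the fibre module over the output type. -/
structure Repres {T : Type u} (S : Signature T) where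
  mon : FMonad T
  rep : ∀ (i : S.idx) (V : T → Type u),
    Args mon.obj V (S.ar i).1 → mon.obj V (S.ar i).2
  rep_hom : ∀ (i : S.idx) {V W : T → Type u} (f : ∀ t, V t → mon.obj W t)
      (x : Args mon.obj V (S.ar i).1),
    rep i W (argSubst mon f x) = mon.subst f (S.ar i).2 (rep i V x)

/-- Componentwise application of a monad morphism to an argument list; this is
the product of the derived fibres of the module morphism induced by the monad
morphism. -/
def argApp {T : Type u} {P Q : FMonad T} (h : FMonadHom P Q) {V : T → Type u} :
    ∀ {l : List (List T × T)}, Args P.obj V l → Args Q.obj V l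
  | _, .nil => .nil
  | _, .cons (b := b) x xs => .cons (h.app (pow b.1 V) b.2 x) (argApp h xs)

/-- A morphism of representations: a monad morphism commuting with the
representation module morphisms. -/
structure RepresHom {T : Type u} {S : Signature T} (P Q : Repres S) where
  mh : FMonadHom P.mon Q.mon
  commute : ∀ (i : S.idx) (V : T → Type u) (x : Args P.mon.obj V (S.ar i).1),
    mh.app V (S.ar i).2 (P.rep i V x) = Q.rep i V (argApp mh x)

/-!
The initial representation is the syntax of `S`: terms built from variables and the
operations of `S`, an argument `(s⃗, t)` of an operation being a term of type `t` in which
fresh variables of types `s⃗` are bound. Capture-avoiding substitution makes the terms a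
monad, and the operations are module morphisms since substitution is defined to commute
with them. For a representation `R`, interpreting variables by the unit of `R` and
operations by the representation maps of `R` is a monad morphism because those maps are
module morphisms, and it commutes with the representations by construction. Any morphism
of representations out of the syntax agrees with it on variables and on operations, hence,
by structural induction, everywhere.
-/

section Pow

variable {T : Type u}

def Fresh.map {a : T} {X Y : T → Type u} (g : ∀ t, X t → Y t) :
    ∀ t, Fresh a X t → Fresh a Y t
  | _, .old v => .old (g _ v)
  | _, .new => .new

theorem Fresh.map_map {a : T} {X Y Z : T → Type u} (g : ∀ t, X t → Y t)
    (g' : ∀ t, Y t → Z t) :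
    (fun t x => Fresh.map g' t (Fresh.map (a := a) g t x))
      = Fresh.map fun t x => g' t (g t x) := by
  funext t x
  cases x <;> rfl

theorem Fresh.map_id {a : T} {X : T → Type u} :
    Fresh.map (a := a) (X := X) (fun _ x => x) = fun _ x => x := by
  funext t x
  cases x <;> rfl

def pow.map : ∀ (s : List T) {X Y : T → Type u}, (∀ t, X t → Y t) →
    ∀ t, pow s X t → pow s Y t
  | [], _, _, g => g
  | _ :: s, _, _, g => pow.map s (Fresh.map g)

def pow.old : ∀ (s : List T) {X : T → Type u} (t : T), X t → pow s X t
  | [], _, _, v => v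
  | _ :: s, _, _, v => pow.old s _ (.old v)

/-- The fresh variables of type `t` in `pow s X`, i.e. the positions of `t` in `s`. -/
inductive FreshVar : List T → T → Type u where
  | head : ∀ {a : T} {s : List T}, FreshVar (a :: s) a
  | tail : ∀ {a t : T} {s : List T}, FreshVar s t → FreshVar (a :: s) t

def FreshVar.toPow : ∀ {s : List T} {X : T → Type u} {t : T}, FreshVar s t → pow s X t
  | a :: s, X, _, .head => pow.old s _ (Fresh.new (a := a) (V := X))
  | _ :: _, _, _, .tail k => k.toPow

def pow.split : ∀ (s : List T) {X : T → Type u} {t : T}, pow s X t → X t ⊕ FreshVar s t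
  | [], _, _, x => .inl x
  | _ :: s, _, _, x =>
    match pow.split s x with
    | .inl (.old v) => .inl v
    | .inl .new => .inr .head
    | .inr k => .inr k.tail

@[elab_as_elim]
theorem pow.cases {s : List T} {X : T → Type u} {t : T} {motive : pow s X t → Prop}
    (old : ∀ v, motive (pow.old s t v)) (fresh : ∀ k : FreshVar s t, motive k.toPow)
    (x : pow s X t) : motive x := by
  induction s generalizing X with
  | nil => exact old x
  | cons a s ih =>
    refine ih (X := Fresh a X) (fun w => ?_) (fun k => fresh k.tail) x
    cases w with
    | old v => exact old v
    | new => exact fresh .head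

theorem pow.map_map (s : List T) {X Y Z : T → Type u} (g : ∀ t, X t → Y t)
    (g' : ∀ t, Y t → Z t) :
    (fun t x => pow.map s g' t (pow.map s g t x)) = pow.map s fun t x => g' t (g t x) := by
  induction s generalizing X Y Z with
  | nil => rfl
  | cons a s ih => exact (ih (Fresh.map g) (Fresh.map g')).trans (by rw [Fresh.map_map]; rfl)

theorem pow.map_id (s : List T) {X : T → Type u} :
    pow.map s (X := X) (fun _ x => x) = fun _ x => x := by
  induction s generalizing X with
  | nil => rfl
  | cons a s ih => simp only [pow.map, Fresh.map_id]; exact ih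

theorem pow.map_old (s : List T) {X Y : T → Type u} (g : ∀ t, X t → Y t) (t : T)
    (v : X t) : pow.map s g t (pow.old s t v) = pow.old s t (g t v) := by
  induction s generalizing X Y with
  | nil => rfl
  | cons a s ih => exact ih (Fresh.map g) (v := .old v)

theorem pow.map_toPow {s : List T} {X Y : T → Type u} (g : ∀ t, X t → Y t) {t : T}
    (k : FreshVar s t) : pow.map s g t k.toPow = k.toPow := by
  induction k generalizing X Y with
  | head => exact pow.map_old _ (Fresh.map g) _ .new
  | tail k ih => exact ih (Fresh.map g)

theorem pow.split_old (s : List T) {X : T → Type u} (t : T) (v : X t) :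
    pow.split s (pow.old s t v) = .inl v := by
  induction s generalizing X with
  | nil => rfl
  | cons a s ih => simp only [pow.split, pow.old, ih]

theorem pow.split_toPow {s : List T} {X : T → Type u} {t : T} (k : FreshVar s t) :
    pow.split s (k.toPow (X := X)) = .inr k := by
  induction k generalizing X with
  | @head a s =>
    show pow.split (a :: s) (pow.old s a (Fresh.new (V := X))) = _
    simp only [pow.split, pow.split_old]
  | @tail a _ s k ih =>
    show pow.split (a :: s) (k.toPow : pow s (Fresh a X) _) = _
    simp only [pow.split, ih]

end Pow

section Lshift

variable {T : Type u} (P : FMonad T)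

theorem lshift_old (s : List T) {V W : T → Type u} (f : ∀ t, V t → P.obj W t) (t : T)
    (v : V t) :
    lshift P s f t (pow.old s t v) = P.subst (fun t w => P.eta t (pow.old s t w)) t (f t v) := by
  induction s generalizing V W with
  | nil => exact (P.subst_eta t _).symm
  | cons a s ih =>
    refine (ih (fshift P a f) (.old v)).trans ?_
    simp only [fshift, P.subst_subst, P.eta_subst]
    rfl

theorem lshift_toPow {s : List T} {V W : T → Type u} (f : ∀ t, V t → P.obj W t) {t : T}
    (k : FreshVar s t) : lshift P s f t k.toPow = P.eta t k.toPow := by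
  induction k generalizing V W with
  | @head a s =>
    refine (lshift_old P s (fshift P a f) a .new).trans ?_
    simp only [fshift, P.eta_subst]
    rfl
  | tail k ih => exact ih (fshift P _ f)

theorem lshift_eta_comp (s : List T) {X Y : T → Type u} (g : ∀ t, X t → Y t) :
    lshift P s (fun t v => P.eta t (g t v)) = fun t v => P.eta t (pow.map s g t v) := by
  funext t x
  induction x using pow.cases with
  | old v => rw [lshift_old, P.eta_subst, pow.map_old]
  | fresh k => rw [lshift_toPow, pow.map_toPow]

end Lshift

namespace Signature

variable {T : Type u}

@[reducible] def powStack : List (List T) → (T → Type u) → T → Type u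
  | [], V => V
  | s :: c, V => pow s (powStack c V)

/- A term whose variables range over `W` cannot be indexed by `W` itself,
since the index would live in `Type (u + 1)`; instead the outer variables `V` are a
parameter and a term carries a stack `c` of binder lists, its variables being
`powStack c V`. Going under a binder `s` is `c ↦ s :: c`, and `powStack (s :: c) V`
is `pow s (powStack c V)` by definition. -/
mutual
inductive Term (S : Signature T) (V : T → Type u) : List (List T) → T → Type u where
  | var : ∀ {c : List (List T)} {t : T}, powStack c V t → Term S V c t
  | op : ∀ {c : List (List T)} (i : S.idx), TermArgs S V c (S.ar i).1 → Term S V c (S.ar i).2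
inductive TermArgs (S : Signature T) (V : T → Type u) :
    List (List T) → List (List T × T) → Type u where
  | nil : ∀ {c : List (List T)}, TermArgs S V c []
  | cons : ∀ {c : List (List T)} {b : List T × T} {bs : List (List T × T)},
      Term S V (b.1 :: c) b.2 → TermArgs S V c bs → TermArgs S V c (b :: bs)
end

variable {S : Signature T}

mutual
def Term.rename {V W : T → Type u} {c c' : List (List T)}
    (g : ∀ t, powStack c V t → powStack c' W t) : ∀ {t : T}, S.Term V c t → S.Term W c' t
  | _, .var x => .var (g _ x)
  | _, .op i as => .op i (TermArgs.rename g as)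
def TermArgs.rename {V W : T → Type u} {c c' : List (List T)}
    (g : ∀ t, powStack c V t → powStack c' W t) :
    ∀ {l : List (List T × T)}, S.TermArgs V c l → S.TermArgs W c' l
  | _, .nil => .nil
  | _, .cons (b := b) x xs =>
      .cons (Term.rename (c := b.1 :: c) (c' := b.1 :: c') (pow.map b.1 g) x) (xs.rename g)
end

def liftSubst (s : List T) {V W : T → Type u} {c c' : List (List T)}
    (f : ∀ t, powStack c V t → S.Term W c' t) (t : T) (x : pow s (powStack c V) t) :
    S.Term W (s :: c') t :=
  match pow.split s x with
  | .inl v => (f t v).rename (c' := s :: c') fun t v => pow.old s t v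
  | .inr k => .var k.toPow

mutual
def Term.subst {V W : T → Type u} {c c' : List (List T)}
    (f : ∀ t, powStack c V t → S.Term W c' t) : ∀ {t : T}, S.Term V c t → S.Term W c' t
  | _, .var x => f _ x
  | _, .op i as => .op i (TermArgs.subst f as)
def TermArgs.subst {V W : T → Type u} {c c' : List (List T)}
    (f : ∀ t, powStack c V t → S.Term W c' t) :
    ∀ {l : List (List T × T)}, S.TermArgs V c l → S.TermArgs W c' l
  | _, .nil => .nil
  | _, .cons (b := b) x xs => .cons (Term.subst (liftSubst b.1 f) x) (xs.subst f)
end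

mutual
theorem Term.rename_rename {V W U : T → Type u} {c c' c'' : List (List T)}
    (g : ∀ t, powStack c V t → powStack c' W t) (g' : ∀ t, powStack c' W t → powStack c'' U t) :
    ∀ {t : T} (x : S.Term V c t), (x.rename g).rename g' = x.rename fun t v => g' t (g t v)
  | _, .var _ => rfl
  | _, .op i as => congrArg (Term.op i) (TermArgs.rename_rename g g' as)
theorem TermArgs.rename_rename {V W U : T → Type u} {c c' c'' : List (List T)}
    (g : ∀ t, powStack c V t → powStack c' W t) (g' : ∀ t, powStack c' W t → powStack c'' U t) :
    ∀ {l : List (List T × T)} (as : S.TermArgs V c l),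
      (as.rename g).rename g' = as.rename fun t v => g' t (g t v)
  | _, .nil => rfl
  | _, .cons (b := b) x xs => by
    simp only [TermArgs.rename]
    rw [Term.rename_rename, TermArgs.rename_rename, pow.map_map]
end

mutual
theorem Term.rename_id {V : T → Type u} {c : List (List T)} :
    ∀ {t : T} (x : S.Term V c t), x.rename (fun _ v => v) = x
  | _, .var _ => rfl
  | _, .op i as => congrArg (Term.op i) (TermArgs.rename_id as)
theorem TermArgs.rename_id {V : T → Type u} {c : List (List T)} :
    ∀ {l : List (List T × T)} (as : S.TermArgs V c l), as.rename (fun _ v => v) = as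
  | _, .nil => rfl
  | _, .cons (b := b) x xs => by
    simp only [TermArgs.rename, pow.map_id]
    rw [Term.rename_id, TermArgs.rename_id]
end

theorem liftSubst_old (s : List T) {V W : T → Type u} {c c' : List (List T)}
    (f : ∀ t, powStack c V t → S.Term W c' t) (t : T) (v : powStack c V t) :
    liftSubst s f t (pow.old s t v)
      = (f t v).rename (c' := s :: c') fun t v => pow.old s t v := by
  simp only [liftSubst, pow.split_old]

theorem liftSubst_toPow (s : List T) {V W : T → Type u} {c c' : List (List T)}
    (f : ∀ t, powStack c V t → S.Term W c' t) {t : T} (k : FreshVar s t) :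
    liftSubst s f t k.toPow = .var k.toPow := by
  simp only [liftSubst, pow.split_toPow]

theorem liftSubst_var (s : List T) {V W : T → Type u} {c c' : List (List T)}
    (g : ∀ t, powStack c V t → powStack c' W t) :
    liftSubst (S := S) s (fun t v => .var (g t v)) = fun t v => .var (pow.map s g t v) := by
  funext t x
  induction x using pow.cases with
  | old v => rw [liftSubst_old, pow.map_old]; rfl
  | fresh k => rw [liftSubst_toPow, pow.map_toPow]

mutual
theorem Term.subst_var {V W : T → Type u} {c c' : List (List T)}
    (g : ∀ t, powStack c V t → powStack c' W t) :
    ∀ {t : T} (x : S.Term V c t), x.subst (fun t v => .var (g t v)) = x.rename g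
  | _, .var _ => rfl
  | _, .op i as => congrArg (Term.op i) (TermArgs.subst_var g as)
theorem TermArgs.subst_var {V W : T → Type u} {c c' : List (List T)}
    (g : ∀ t, powStack c V t → powStack c' W t) :
    ∀ {l : List (List T × T)} (as : S.TermArgs V c l),
      as.subst (fun t v => .var (g t v)) = as.rename g
  | _, .nil => rfl
  | _, .cons (b := b) x xs => by
    simp only [TermArgs.subst, TermArgs.rename, liftSubst_var]
    rw [Term.subst_var, TermArgs.subst_var]
end

theorem liftSubst_map (s : List T) {V W U : T → Type u} {c c' c'' : List (List T)}
    (g : ∀ t, powStack c V t → powStack c' W t) (f : ∀ t, powStack c' W t → S.Term U c'' t) :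
    (fun t v => liftSubst s f t (pow.map s g t v)) = liftSubst s fun t v => f t (g t v) := by
  funext t x
  induction x using pow.cases with
  | old v => rw [pow.map_old, liftSubst_old, liftSubst_old]
  | fresh k => rw [pow.map_toPow, liftSubst_toPow, liftSubst_toPow]

mutual
theorem Term.subst_rename {V W U : T → Type u} {c c' c'' : List (List T)}
    (g : ∀ t, powStack c V t → powStack c' W t) (f : ∀ t, powStack c' W t → S.Term U c'' t) :
    ∀ {t : T} (x : S.Term V c t), (x.rename g).subst f = x.subst fun t v => f t (g t v)
  | _, .var _ => rfl
  | _, .op i as => congrArg (Term.op i) (TermArgs.subst_rename g f as)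
theorem TermArgs.subst_rename {V W U : T → Type u} {c c' c'' : List (List T)}
    (g : ∀ t, powStack c V t → powStack c' W t) (f : ∀ t, powStack c' W t → S.Term U c'' t) :
    ∀ {l : List (List T × T)} (as : S.TermArgs V c l),
      (as.rename g).subst f = as.subst fun t v => f t (g t v)
  | _, .nil => rfl
  | _, .cons (b := b) x xs => by
    simp only [TermArgs.subst, TermArgs.rename]
    rw [Term.subst_rename, TermArgs.subst_rename, liftSubst_map]
end

theorem rename_liftSubst (s : List T) {V W U : T → Type u} {c c' c'' : List (List T)}
    (f : ∀ t, powStack c V t → S.Term W c' t) (g : ∀ t, powStack c' W t → powStack c'' U t) :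
    (fun t v => (liftSubst s f t v).rename (pow.map s g))
      = liftSubst s fun t v => (f t v).rename g := by
  funext t x
  induction x using pow.cases with
  | old v =>
    simp only [liftSubst_old, Term.rename_rename, pow.map_old]
  | fresh k =>
    rw [liftSubst_toPow, liftSubst_toPow]
    exact congrArg Term.var (pow.map_toPow g k)

mutual
theorem Term.rename_subst {V W U : T → Type u} {c c' c'' : List (List T)}
    (f : ∀ t, powStack c V t → S.Term W c' t) (g : ∀ t, powStack c' W t → powStack c'' U t) :
    ∀ {t : T} (x : S.Term V c t), (x.subst f).rename g = x.subst fun t v => (f t v).rename g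
  | _, .var _ => rfl
  | _, .op i as => congrArg (Term.op i) (TermArgs.rename_subst f g as)
theorem TermArgs.rename_subst {V W U : T → Type u} {c c' c'' : List (List T)}
    (f : ∀ t, powStack c V t → S.Term W c' t) (g : ∀ t, powStack c' W t → powStack c'' U t) :
    ∀ {l : List (List T × T)} (as : S.TermArgs V c l),
      (as.subst f).rename g = as.subst fun t v => (f t v).rename g
  | _, .nil => rfl
  | _, .cons (b := b) x xs => by
    simp only [TermArgs.subst, TermArgs.rename]
    rw [Term.rename_subst, TermArgs.rename_subst, rename_liftSubst]
end

theorem subst_liftSubst (s : List T) {V W U : T → Type u} {c c' c'' : List (List T)}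
    (f : ∀ t, powStack c V t → S.Term W c' t) (h : ∀ t, powStack c' W t → S.Term U c'' t) :
    (fun t v => (liftSubst s f t v).subst (liftSubst s h))
      = liftSubst s fun t v => (f t v).subst h := by
  funext t x
  induction x using pow.cases with
  | old v => simp only [liftSubst_old, Term.subst_rename, Term.rename_subst]
  | fresh k => simp only [liftSubst_toPow, Term.subst]

mutual
theorem Term.subst_subst {V W U : T → Type u} {c c' c'' : List (List T)}
    (f : ∀ t, powStack c V t → S.Term W c' t) (h : ∀ t, powStack c' W t → S.Term U c'' t) :
    ∀ {t : T} (x : S.Term V c t), (x.subst f).subst h = x.subst fun t v => (f t v).subst h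
  | _, .var _ => rfl
  | _, .op i as => congrArg (Term.op i) (TermArgs.subst_subst f h as)
theorem TermArgs.subst_subst {V W U : T → Type u} {c c' c'' : List (List T)}
    (f : ∀ t, powStack c V t → S.Term W c' t) (h : ∀ t, powStack c' W t → S.Term U c'' t) :
    ∀ {l : List (List T × T)} (as : S.TermArgs V c l),
      (as.subst f).subst h = as.subst fun t v => (f t v).subst h
  | _, .nil => rfl
  | _, .cons (b := b) x xs => by
    simp only [TermArgs.subst]
    rw [Term.subst_subst, TermArgs.subst_subst, subst_liftSubst]
end

abbrev termMonad (S : Signature T) : FMonad T where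
  obj V t := S.Term V [] t
  eta _ v := .var v
  subst f _ x := x.subst f
  eta_subst _ _ _ := rfl
  subst_eta _ x := (Term.subst_var (fun _ v => v) x).trans (Term.rename_id x)
  subst_subst f g _ x := Term.subst_subst f g x

def Term.abstract {V : T → Type u} {s : List T} {t : T} (x : S.Term (pow s V) [] t) :
    S.Term V [s] t :=
  Term.rename (V := pow s V) (W := V) (c := []) (c' := [s]) (fun _ v => v) x

theorem abstract_lshift (s : List T) {V W : T → Type u}
    (f : ∀ t, V t → (termMonad S).obj W t) (t : T) (x : pow s V t) :
    (lshift (termMonad S) s f t x).abstract = liftSubst (c := []) (c' := []) s f t x := by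
  induction x using pow.cases with
  | old v =>
    rw [lshift_old, liftSubst_old]
    exact (Term.rename_subst _ _ (f t v)).trans (Term.subst_var _ (f t v))
  | fresh k => rw [lshift_toPow, liftSubst_toPow]; rfl

def TermArgs.ofArgs {V : T → Type u} :
    ∀ {l : List (List T × T)}, Args (termMonad S).obj V l → S.TermArgs V [] l
  | _, .nil => .nil
  | _, .cons x xs => .cons (Term.abstract x) (ofArgs xs)

theorem TermArgs.ofArgs_argSubst {V W : T → Type u} (f : ∀ t, V t → S.Term W [] t) :
    ∀ {l : List (List T × T)} (xs : Args (termMonad S).obj V l),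
      ofArgs (argSubst (termMonad S) f xs) = (ofArgs xs).subst f
  | _, .nil => rfl
  | _, .cons (b := b) x xs => by
    simp only [argSubst, ofArgs, TermArgs.subst, ofArgs_argSubst f xs]
    congr 1
    calc Term.abstract ((termMonad S).subst (lshift (termMonad S) b.1 f) b.2 x)
        = x.subst fun t v => (lshift (termMonad S) b.1 f t v).abstract :=
          Term.rename_subst _ _ x
      _ = x.subst (V := pow b.1 V) (c := []) fun t v => liftSubst (c := []) (c' := []) b.1 f t v :=
          by simp only [abstract_lshift]
      _ = (Term.abstract x).subst (liftSubst b.1 f) :=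
          (Term.subst_rename (V := pow b.1 V) (W := V) (c := []) (c' := [b.1]) (fun _ v => v)
            (liftSubst b.1 f) x).symm

def syntaxRepres (S : Signature T) : Repres S where
  mon := termMonad S
  rep i _ xs := .op i (TermArgs.ofArgs xs)
  rep_hom i _ _ f xs := congrArg (Term.op i) (TermArgs.ofArgs_argSubst f xs)

section Interp

variable (R : Repres S)

mutual
def Term.interp {V : T → Type u} : ∀ {c : List (List T)} {t : T},
    S.Term V c t → R.mon.obj (powStack c V) t
  | _, _, .var x => R.mon.eta _ x
  | _, _, .op i as => R.rep i _ (TermArgs.interp as)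
def TermArgs.interp {V : T → Type u} : ∀ {c : List (List T)} {l : List (List T × T)},
    S.TermArgs V c l → Args R.mon.obj (powStack c V) l
  | _, _, .nil => .nil
  | _, _, .cons x xs => .cons (Term.interp x) (TermArgs.interp xs)
end

mutual
theorem Term.interp_rename {V W : T → Type u} {c c' : List (List T)}
    (g : ∀ t, powStack c V t → powStack c' W t) : ∀ {t : T} (x : S.Term V c t),
    (x.rename g).interp R = R.mon.subst (fun t v => R.mon.eta t (g t v)) t (x.interp R)
  | _, .var v => (R.mon.eta_subst (fun t v => R.mon.eta t (g t v)) _ v).symm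
  | _, .op i as => by
    simp only [Term.rename, Term.interp]
    rw [TermArgs.interp_rename g as, R.rep_hom]
theorem TermArgs.interp_rename {V W : T → Type u} {c c' : List (List T)}
    (g : ∀ t, powStack c V t → powStack c' W t) :
    ∀ {l : List (List T × T)} (as : S.TermArgs V c l),
      (as.rename g).interp R = argSubst R.mon (fun t v => R.mon.eta t (g t v)) (as.interp R)
  | _, .nil => rfl
  | _, .cons (b := b) x xs => by
    simp only [TermArgs.rename, TermArgs.interp, argSubst]
    rw [Term.interp_rename, TermArgs.interp_rename g xs, lshift_eta_comp]
end

theorem interp_liftSubst (s : List T) {V W : T → Type u} {c c' : List (List T)}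
    (f : ∀ t, powStack c V t → S.Term W c' t) :
    (fun t x => (liftSubst s f t x).interp R) = lshift R.mon s fun t v => (f t v).interp R := by
  funext t x
  induction x using pow.cases with
  | old v => rw [liftSubst_old, Term.interp_rename, lshift_old]
  | fresh k => rw [liftSubst_toPow, lshift_toPow]; rfl

mutual
theorem Term.interp_subst {V W : T → Type u} {c c' : List (List T)}
    (f : ∀ t, powStack c V t → S.Term W c' t) : ∀ {t : T} (x : S.Term V c t),
    (x.subst f).interp R = R.mon.subst (fun t v => (f t v).interp R) t (x.interp R)
  | _, .var v => (R.mon.eta_subst (fun t v => (f t v).interp R) _ v).symm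
  | _, .op i as => by
    simp only [Term.subst, Term.interp]
    rw [TermArgs.interp_subst f as, R.rep_hom]
theorem TermArgs.interp_subst {V W : T → Type u} {c c' : List (List T)}
    (f : ∀ t, powStack c V t → S.Term W c' t) :
    ∀ {l : List (List T × T)} (as : S.TermArgs V c l),
      (as.subst f).interp R = argSubst R.mon (fun t v => (f t v).interp R) (as.interp R)
  | _, .nil => rfl
  | _, .cons (b := b) x xs => by
    simp only [TermArgs.subst, TermArgs.interp, argSubst]
    rw [Term.interp_subst, TermArgs.interp_subst f xs, interp_liftSubst]
end

def interpMonadHom : FMonadHom (termMonad S) R.mon where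
  app _ _ x := Term.interp (c := []) R x
  app_eta _ _ := rfl
  app_subst f _ x := Term.interp_subst R f x

theorem interp_abstract {V : T → Type u} {s : List T} {t : T} (x : S.Term (pow s V) [] t) :
    x.abstract.interp R = x.interp R :=
  (Term.interp_rename R _ x).trans (R.mon.subst_eta t _)

theorem TermArgs.interp_ofArgs {V : T → Type u} :
    ∀ {l : List (List T × T)} (xs : Args (termMonad S).obj V l),
      (ofArgs xs).interp R = argApp (interpMonadHom R) xs
  | _, .nil => rfl
  | _, .cons x xs => by
    simp only [ofArgs, TermArgs.interp, argApp, interp_abstract, interp_ofArgs xs]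
    rfl

def interpHom : RepresHom (syntaxRepres S) R where
  mh := interpMonadHom R
  commute i _ xs := congrArg (R.rep i _) (TermArgs.interp_ofArgs R xs)

end Interp

def Term.flatten {V : T → Type u} {c : List (List T)} {t : T} (x : S.Term V c t) :
    (termMonad S).obj (powStack c V) t :=
  Term.rename (V := V) (W := powStack c V) (c := c) (c' := []) (fun _ v => v) x

def TermArgs.toArgs {V : T → Type u} {c : List (List T)} :
    ∀ {l : List (List T × T)}, S.TermArgs V c l → Args (termMonad S).obj (powStack c V) l
  | _, .nil => .nil
  | _, .cons x xs => .cons x.flatten xs.toArgs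

theorem TermArgs.rename_eq_ofArgs_toArgs {V : T → Type u} {c : List (List T)} :
    ∀ {l : List (List T × T)} (as : S.TermArgs V c l),
      as.rename (V := V) (W := powStack c V) (c := c) (c' := []) (fun _ v => v)
        = ofArgs as.toArgs
  | _, .nil => rfl
  | _, .cons (b := b) x xs => by
    simp only [TermArgs.rename, toArgs, ofArgs, rename_eq_ofArgs_toArgs xs, pow.map_id]
    congr 1
    unfold Term.abstract Term.flatten
    rw [Term.rename_rename]

end Signature

@[ext]
theorem FMonadHom.ext {T : Type u} {P Q : FMonad T} {f g : FMonadHom P Q}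
    (h : f.app = g.app) : f = g := by
  cases f; cases g; cases h; rfl

@[ext]
theorem RepresHom.ext {T : Type u} {S : Signature T} {P Q : Repres S} {f g : RepresHom P Q}
    (h : f.mh = g.mh) : f = g := by
  cases f; cases g; cases h; rfl

namespace RepresHom

open Signature

variable {T : Type u} {S : Signature T} {R : Repres S} (h : RepresHom (syntaxRepres S) R)

mutual
theorem app_flatten {V : T → Type u} :
    ∀ {c : List (List T)} {t : T} (x : S.Term V c t), h.mh.app _ t x.flatten = x.interp R
  | _, _, .var v => by
    simp only [Term.flatten, Term.rename, Term.interp]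
    exact h.mh.app_eta _ v
  | _, _, .op i as => by
    refine (congrArg (h.mh.app _ _ ∘ Term.op i) (TermArgs.rename_eq_ofArgs_toArgs as)).trans ?_
    refine (h.commute i _ as.toArgs).trans ?_
    exact congrArg (R.rep i _) (argApp_toArgs as)
theorem argApp_toArgs {V : T → Type u} :
    ∀ {c : List (List T)} {l : List (List T × T)} (as : S.TermArgs V c l),
      argApp h.mh as.toArgs = as.interp R
  | _, _, .nil => rfl
  | _, _, .cons x xs => by
    simp only [TermArgs.toArgs, argApp, TermArgs.interp, argApp_toArgs xs]
    rw [app_flatten x]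
end

theorem eq_interpHom : h = interpHom R := by
  ext V t x
  exact (congrArg (h.mh.app V t) (Term.rename_id x).symm).trans (h.app_flatten x)

end RepresHom

theorem representations_have_initial_object (T : Type u) (S : Signature T) :
    ∃ R₀ : Repres S, ∀ R : Repres S,
      Nonempty (RepresHom R₀ R) ∧ ∀ f g : RepresHom R₀ R, f = g :=
  ⟨S.syntaxRepres, fun R =>
    ⟨⟨Signature.interpHom R⟩, fun f g => f.eq_interpHom.trans g.eq_interpHom.symm⟩⟩
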